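/- arXiv:cs/0612076 — 6 statements merged into one kernel-verified Lean document; each statement's English description precedes it below -/
import Mathlib

section
/- For positive reals t, and N×N, n×n nonnegative diagonal matrices D and D̃, the system δ = (1/n)·tr(D(I + t·δ̃·D)⁻¹), δ̃ = (1/n)·tr(D̃(I + t·δ·D̃)⁻¹) admits a unique solution (δ, δ̃) with δ > 0 and δ̃ > 0, provided tr(D) > 0 and tr(D̃) > 0. -/
/-!
With `f y = (1/n) tr(D (1 + t y D)⁻¹)` and `g x = (1/n) tr(D̃ (1 + t x D̃)⁻¹)` the system reads
`x = f y`, `y = g x`. Both maps are positive, continuous and decreasing on `[0, ∞)`, so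
`x ↦ x - f (g x)` changes sign on `[0, f 0]` and the intermediate value theorem gives a solution.
For uniqueness, `y ↦ y f y` and `x ↦ x g x` are strictly increasing, since every summand
`y d / (1 + t y d)` with `d > 0` is. Given solutions with `x₁ < x₂`, either `y₁ < y₂`, contradicting
that `f` decreases, or `y₂ ≤ y₁`, and then `x₁ y₁ < x₂ y₂ = y₂ f y₂ ≤ y₁ f y₁ = x₁ y₁`.
-/

open Matrix Set

section Resolvent

variable {ι : Type*} [Fintype ι]

theorem trace_diagonal_mul_inv_one_add_smul_diagonal {K : Type*} [Field K] [DecidableEq ι]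
    {v : ι → K} {s : K}
    (h : ∀ i, 1 + s * v i ≠ 0) :
    (diagonal v * (1 + s • diagonal v)⁻¹).trace = ∑ i, v i / (1 + s * v i) := by
  have hdiag : (1 : Matrix ι ι K) + s • diagonal v = diagonal fun i ↦ 1 + s * v i := by
    rw [← diagonal_one, ← diagonal_smul, diagonal_add]; rfl
  have hinv : (diagonal fun i ↦ 1 + s * v i)⁻¹ = diagonal fun i ↦ (1 + s * v i)⁻¹ :=
    inv_eq_right_inv <| by
      rw [diagonal_mul_diagonal, ← diagonal_one]
      exact congrArg diagonal (funext fun i ↦ mul_inv_cancel₀ (h i))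
  simp only [hdiag, hinv, diagonal_mul_diagonal, trace_diagonal, div_eq_mul_inv]

theorem exists_pos_of_trace_diagonal_pos {R : Type*} [AddCommMonoid R] [LinearOrder R]
    [IsOrderedAddMonoid R] [DecidableEq ι] {v : ι → R} (h : 0 < (diagonal v).trace) :
    ∃ i, 0 < v i := by
  simpa using Finset.exists_lt_of_sum_lt (s := Finset.univ) (f := fun _ ↦ 0) (by simpa using h)

variable {a t : ℝ}

theorem one_add_mul_pos (ha : 0 ≤ a) (ht : 0 ≤ t) {y : ℝ} (hy : 0 ≤ y) : 0 < 1 + t * y * a := by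
  have := mul_nonneg (mul_nonneg ht hy) ha
  linarith

theorem antitoneOn_div_one_add_mul (ha : 0 ≤ a) (ht : 0 ≤ t) :
    AntitoneOn (fun y ↦ a / (1 + t * y * a)) (Ici 0) := by
  intro y₁ hy₁ y₂ hy₂ hy
  dsimp only
  have := one_add_mul_pos ha ht hy₁
  gcongr

theorem strictMonoOn_mul_div_one_add_mul (ha : 0 < a) (ht : 0 ≤ t) :
    StrictMonoOn (fun y ↦ y * (a / (1 + t * y * a))) (Ici 0) := by
  intro y₁ hy₁ y₂ hy₂ hy
  dsimp only
  rw [mul_div_assoc', mul_div_assoc',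
    div_lt_div_iff₀ (one_add_mul_pos ha.le ht hy₁) (one_add_mul_pos ha.le ht hy₂)]
  nlinarith [mul_lt_mul_of_pos_right hy ha]

theorem monotoneOn_mul_div_one_add_mul (ha : 0 ≤ a) (ht : 0 ≤ t) :
    MonotoneOn (fun y ↦ y * (a / (1 + t * y * a))) (Ici 0) := by
  rcases ha.eq_or_lt with rfl | ha
  · simp [monotoneOn_const]
  · exact (strictMonoOn_mul_div_one_add_mul ha ht).monotoneOn

noncomputable def resolventSum (c t : ℝ) (v : ι → ℝ) (y : ℝ) : ℝ :=
  c * ∑ i, v i / (1 + t * y * v i)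

variable {c : ℝ} {v : ι → ℝ}

theorem resolventSum_pos (hc : 0 < c) (hv : ∀ i, 0 ≤ v i) (hv₀ : ∃ i, 0 < v i) (ht : 0 ≤ t)
    {y : ℝ} (hy : 0 ≤ y) : 0 < resolventSum c t v y := by
  obtain ⟨i₀, hi₀⟩ := hv₀
  refine mul_pos hc <| Finset.sum_pos' (fun i _ ↦ ?_) ⟨i₀, Finset.mem_univ _, ?_⟩
  · exact div_nonneg (hv i) (one_add_mul_pos (hv i) ht hy).le
  · exact div_pos hi₀ (one_add_mul_pos hi₀.le ht hy)

theorem continuousOn_resolventSum (hv : ∀ i, 0 ≤ v i) (ht : 0 ≤ t) :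
    ContinuousOn (resolventSum c t v) (Ici 0) := by
  refine continuousOn_const.mul <| continuousOn_finsetSum _ fun i _ ↦ ?_
  exact continuousOn_const.div (by fun_prop) fun y hy ↦ (one_add_mul_pos (hv i) ht hy).ne'

theorem antitoneOn_resolventSum (hc : 0 ≤ c) (hv : ∀ i, 0 ≤ v i) (ht : 0 ≤ t) :
    AntitoneOn (resolventSum c t v) (Ici 0) := fun _ hy₁ _ hy₂ hy ↦
  mul_le_mul_of_nonneg_left (Finset.sum_le_sum fun i _ ↦
    antitoneOn_div_one_add_mul (hv i) ht hy₁ hy₂ hy) hc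

theorem strictMonoOn_mul_resolventSum (hc : 0 < c) (hv : ∀ i, 0 ≤ v i) (hv₀ : ∃ i, 0 < v i)
    (ht : 0 ≤ t) : StrictMonoOn (fun y ↦ y * resolventSum c t v y) (Ici 0) := by
  intro y₁ hy₁ y₂ hy₂ hy
  obtain ⟨i₀, hi₀⟩ := hv₀
  have h_sum : ∑ i, y₁ * (v i / (1 + t * y₁ * v i)) < ∑ i, y₂ * (v i / (1 + t * y₂ * v i)) :=
    Finset.sum_lt_sum (fun i _ ↦ monotoneOn_mul_div_one_add_mul (hv i) ht hy₁ hy₂ hy.le)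
      ⟨i₀, Finset.mem_univ _, strictMonoOn_mul_div_one_add_mul hi₀ ht hy₁ hy₂ hy⟩
  simpa only [resolventSum, mul_left_comm _ c, Finset.mul_sum] using
    mul_lt_mul_of_pos_left h_sum hc

end Resolvent

section CoupledSystem

variable {f g : ℝ → ℝ}

theorem exists_pos_coupled_solution (hf : ContinuousOn f (Ici 0)) (hg : ContinuousOn g (Ici 0))
    (hf_anti : AntitoneOn f (Ici 0)) (hf_pos : ∀ y, 0 ≤ y → 0 < f y)
    (hg_pos : ∀ x, 0 ≤ x → 0 < g x) : ∃ x y, 0 < x ∧ 0 < y ∧ x = f y ∧ y = g x := by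
  have hfg : ContinuousOn (fun x ↦ x - f (g x)) (Icc 0 (f 0)) :=
    (continuousOn_id.sub (hf.comp hg fun x hx ↦ (hg_pos x hx).le)).mono Icc_subset_Ici_self
  have hf₀ := hf_pos 0 le_rfl
  have h_left : 0 - f (g 0) ≤ 0 := by linarith [hf_pos _ (hg_pos 0 le_rfl).le]
  have h_right : 0 ≤ f 0 - f (g (f 0)) :=
    sub_nonneg.2 (hf_anti self_mem_Ici (hg_pos _ hf₀.le).le (hg_pos _ hf₀.le).le)
  obtain ⟨x, hx, hx_eq⟩ := intermediate_value_Icc hf₀.le hfg ⟨h_left, h_right⟩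
  have hx_fix : x = f (g x) := sub_eq_zero.1 hx_eq
  exact ⟨x, g x, hx_fix ▸ hf_pos _ (hg_pos x hx.1).le, hg_pos x hx.1, hx_fix, rfl⟩

theorem not_lt_of_coupled_solutions (hf_anti : AntitoneOn f (Ici 0))
    (hf_mul : MonotoneOn (fun y ↦ y * f y) (Ici 0))
    (hg_mul : StrictMonoOn (fun x ↦ x * g x) (Ici 0)) {x₁ y₁ x₂ y₂ : ℝ}
    (hx₁ : 0 ≤ x₁) (hy₁ : 0 ≤ y₁) (hx₂ : 0 ≤ x₂) (hy₂ : 0 ≤ y₂)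
    (hf₁ : x₁ = f y₁) (hg₁ : y₁ = g x₁) (hf₂ : x₂ = f y₂) (hg₂ : y₂ = g x₂) : ¬ x₁ < x₂ := by
  intro hx
  rcases lt_or_ge y₁ y₂ with hy | hy
  · exact (hf_anti hy₁ hy₂ hy.le).not_gt (hf₁ ▸ hf₂ ▸ hx)
  · refine lt_irrefl (x₁ * y₁) ?_
    calc x₁ * y₁ = x₁ * g x₁ := by rw [← hg₁]
      _ < x₂ * g x₂ := hg_mul hx₁ hx₂ hx
      _ = y₂ * f y₂ := by rw [← hg₂, ← hf₂, mul_comm]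
      _ ≤ y₁ * f y₁ := hf_mul hy₂ hy₁ hy
      _ = x₁ * y₁ := by rw [← hf₁, mul_comm]

theorem existsUnique_pos_coupled_solution (hf : ContinuousOn f (Ici 0))
    (hg : ContinuousOn g (Ici 0)) (hf_anti : AntitoneOn f (Ici 0))
    (hf_mul : MonotoneOn (fun y ↦ y * f y) (Ici 0))
    (hg_mul : StrictMonoOn (fun x ↦ x * g x) (Ici 0))
    (hf_pos : ∀ y, 0 ≤ y → 0 < f y) (hg_pos : ∀ x, 0 ≤ x → 0 < g x) :
    ∃! p : ℝ × ℝ, 0 < p.1 ∧ 0 < p.2 ∧ p.1 = f p.2 ∧ p.2 = g p.1 := by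
  obtain ⟨x, y, hx, hy, hfy, hgx⟩ := exists_pos_coupled_solution hf hg hf_anti hf_pos hg_pos
  refine ⟨(x, y), ⟨hx, hy, hfy, hgx⟩, ?_⟩
  rintro ⟨x', y'⟩ ⟨hx', hy', hfy', hgx'⟩
  have hx_eq : x' = x := le_antisymm
    (not_lt.1 <| not_lt_of_coupled_solutions hf_anti hf_mul hg_mul
      hx.le hy.le hx'.le hy'.le hfy hgx hfy' hgx')
    (not_lt.1 <| not_lt_of_coupled_solutions hf_anti hf_mul hg_mul
      hx'.le hy'.le hx.le hy.le hfy' hgx' hfy hgx)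
  exact Prod.ext hx_eq (hgx'.trans (hx_eq ▸ hgx.symm))

end CoupledSystem

theorem canonical_system_existence_uniqueness_general
    (N n : ℕ)
    (d : Fin N → ℝ) (dt : Fin n → ℝ)
    (hd : ∀ i, 0 ≤ d i) (hdt : ∀ j, 0 ≤ dt j)
    (t : ℝ) (ht : 0 < t)
    (htrD : 0 < (Matrix.diagonal d).trace)
    (htrDt : 0 < (Matrix.diagonal dt).trace) :
    ∃! p : ℝ × ℝ, 0 < p.1 ∧ 0 < p.2 ∧
      p.1 = (1 / (n : ℝ)) *
        (Matrix.diagonal d * (1 + (t * p.2) • Matrix.diagonal d)⁻¹).trace ∧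
      p.2 = (1 / (n : ℝ)) *
        (Matrix.diagonal dt * (1 + (t * p.1) • Matrix.diagonal dt)⁻¹).trace := by
  have hd₀ := exists_pos_of_trace_diagonal_pos htrD
  obtain ⟨j₀, hj₀⟩ := exists_pos_of_trace_diagonal_pos htrDt
  have hc : (0 : ℝ) < 1 / n := by simpa using j₀.pos
  refine (existsUnique_congr fun p ↦ and_congr_right fun hp₁ ↦ and_congr_right fun hp₂ ↦ ?_).2
    (existsUnique_pos_coupled_solution (continuousOn_resolventSum hd ht.le)
      (continuousOn_resolventSum hdt ht.le) (antitoneOn_resolventSum hc.le hd ht.le)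
      (strictMonoOn_mul_resolventSum hc hd hd₀ ht.le).monotoneOn
      (strictMonoOn_mul_resolventSum hc hdt ⟨j₀, hj₀⟩ ht.le)
      (fun _ ↦ resolventSum_pos hc hd hd₀ ht.le) (fun _ ↦ resolventSum_pos hc hdt ⟨j₀, hj₀⟩ ht.le))
  rw [trace_diagonal_mul_inv_one_add_smul_diagonal
      fun i ↦ (one_add_mul_pos (hd i) ht.le hp₂.le).ne',
    trace_diagonal_mul_inv_one_add_smul_diagonal
      fun j ↦ (one_add_mul_pos (hdt j) ht.le hp₁.le).ne']
  rfl

/-- Existence and uniqueness of the positive solution of the canonical system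
δ = (1/n)·tr(D(I + t·δ̃·D)⁻¹), δ̃ = (1/n)·tr(D̃(I + t·δ·D̃)⁻¹). -/
theorem canonical_system_existence_uniqueness
    (N n : ℕ) (hn : 0 < n)
    (d : Fin N → ℝ) (dt : Fin n → ℝ)
    (hd : ∀ i, 0 ≤ d i) (hdt : ∀ j, 0 ≤ dt j)
    (t : ℝ) (ht : 0 < t)
    (htrD : 0 < (Matrix.diagonal d).trace)
    (htrDt : 0 < (Matrix.diagonal dt).trace) :
    ∃! p : ℝ × ℝ, 0 < p.1 ∧ 0 < p.2 ∧
      p.1 = (1 / (n : ℝ)) *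
        (Matrix.diagonal d * (1 + (t * p.2) • Matrix.diagonal d)⁻¹).trace ∧
      p.2 = (1 / (n : ℝ)) *
        (Matrix.diagonal dt * (1 + (t * p.1) • Matrix.diagonal dt)⁻¹).trace :=
  canonical_system_existence_uniqueness_general N n d dt hd hdt t ht htrD htrDt
end

section
/- The function g(δ) = (1/δ)·(1/n)·tr(D(I + t·((1/n)·tr(D̃(I + t·δ·D̃)⁻¹))·D)⁻¹) on (0,∞) is continuous, strictly decreasing, tends to +∞ as δ → 0⁺ and to 0 as δ → ∞; hence the equation g(δ) = 1 has a unique positive solution. -/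
open Matrix Filter

lemma diag_inv {m : ℕ} (f : Fin m → ℝ) (hf : ∀ i, f i ≠ 0) :
    (Matrix.diagonal f)⁻¹ = Matrix.diagonal (fun i => (f i)⁻¹) := by
  apply Matrix.inv_eq_right_inv
  rw [Matrix.diagonal_mul_diagonal,
    show (fun i => f i * (f i)⁻¹) = fun _ => (1:ℝ) from funext fun i => mul_inv_cancel₀ (hf i),
    Matrix.diagonal_one]

lemma trace_form {m : ℕ} (e : Fin m → ℝ) (c : ℝ) (h : ∀ i, (1 : ℝ) + c * e i ≠ 0) :
    (Matrix.diagonal e * (1 + c • Matrix.diagonal e)⁻¹).trace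
      = ∑ i, e i / (1 + c * e i) := by
  have h1 : (1 : Matrix (Fin m) (Fin m) ℝ) + c • Matrix.diagonal e
      = Matrix.diagonal (fun i => 1 + c * e i) := by
    rw [← Matrix.diagonal_one, ← Matrix.diagonal_smul, ← Matrix.diagonal_add]
    rfl
  rw [h1, diag_inv _ h, Matrix.diagonal_mul_diagonal, Matrix.trace_diagonal]
  simp [div_eq_mul_inv]

lemma mydiv_le {a b c : ℝ} (ha : 0 ≤ a) (hc : 0 < c) (h : c ≤ b) : a / b ≤ a / c := by
  have hb : 0 < b := lt_of_lt_of_le hc h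
  rw [div_le_div_iff₀ hb hc]
  exact mul_le_mul_of_nonneg_left h ha

lemma mydiv_lt {a b c : ℝ} (ha : 0 < a) (hc : 0 < c) (h : c < b) : a / b < a / c := by
  have hb : 0 < b := hc.trans h
  rw [div_lt_div_iff₀ hb hc]
  exact mul_lt_mul_of_pos_left h ha

noncomputable abbrev Ffun (n : ℕ) (dt : Fin n → ℝ) (t δ : ℝ) : ℝ :=
  (1/(n:ℝ)) * ∑ j, dt j / (1 + (t*δ) * dt j)

/-- The function g(δ) = f(t,δ)/δ is continuous and strictly decreasing on (0,∞),
tends to +∞ at 0⁺ and to 0 at ∞; hence g(δ) = 1 has a unique positive solution. -/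
theorem g_monotone_unique_solution
    (N n : ℕ) (hn : 0 < n)
    (d : Fin N → ℝ) (dt : Fin n → ℝ)
    (hd : ∀ i, 0 ≤ d i) (hdt : ∀ j, 0 ≤ dt j)
    (htrD : 0 < (Matrix.diagonal d).trace)
    (htrDt : 0 < (Matrix.diagonal dt).trace)
    (t : ℝ) (ht : 0 < t)
    (g : ℝ → ℝ)
    (hg : ∀ δ : ℝ, 0 < δ →
      g δ = (1 / δ) * ((1 / (n : ℝ)) *
        (Matrix.diagonal d *
          (1 + (t * ((1 / (n : ℝ)) *
            (Matrix.diagonal dt * (1 + (t * δ) • Matrix.diagonal dt)⁻¹).trace))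
            • Matrix.diagonal d)⁻¹).trace)) :
    ContinuousOn g (Set.Ioi (0 : ℝ)) ∧
    StrictAntiOn g (Set.Ioi (0 : ℝ)) ∧
    Tendsto g (nhdsWithin 0 (Set.Ioi (0 : ℝ))) atTop ∧
    Tendsto g atTop (nhds 0) ∧
    (∃! δ : ℝ, 0 < δ ∧ g δ = 1) := by
  have hnpos : (0:ℝ) < n := by exact_mod_cast hn
  obtain ⟨i0, hi0⟩ : ∃ i, 0 < d i := by
    by_contra hcon
    push_neg at hcon
    have : (Matrix.diagonal d).trace ≤ 0 := by
      rw [Matrix.trace_diagonal]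
      exact Finset.sum_nonpos fun i _ => hcon i
    linarith
  have hden : ∀ δ : ℝ, 0 < δ → ∀ j, (0:ℝ) < 1 + (t*δ) * dt j := by
    intro δ hδ j
    have : 0 ≤ (t*δ) * dt j := mul_nonneg (mul_nonneg ht.le hδ.le) (hdt j)
    linarith
  have hF0 : ∀ δ : ℝ, 0 < δ → 0 ≤ Ffun n dt t δ := by
    intro δ hδ
    exact mul_nonneg (by positivity)
      (Finset.sum_nonneg fun j _ => div_nonneg (hdt j) (hden δ hδ j).le)
  set M : ℝ := (1/(n:ℝ)) * ∑ j, dt j with hM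
  have hM0 : 0 ≤ M := mul_nonneg (by positivity) (Finset.sum_nonneg fun j _ => hdt j)
  have hFM : ∀ δ : ℝ, 0 < δ → Ffun n dt t δ ≤ M := by
    intro δ hδ
    apply mul_le_mul_of_nonneg_left _ (by positivity : (0:ℝ) ≤ 1/(n:ℝ))
    apply Finset.sum_le_sum
    intro j _
    apply div_le_self (hdt j)
    have : 0 ≤ (t*δ) * dt j := mul_nonneg (mul_nonneg ht.le hδ.le) (hdt j)
    linarith
  have hout : ∀ δ : ℝ, 0 < δ → ∀ i, (0:ℝ) < 1 + (t * Ffun n dt t δ) * d i := by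
    intro δ hδ i
    have : 0 ≤ (t * Ffun n dt t δ) * d i :=
      mul_nonneg (mul_nonneg ht.le (hF0 δ hδ)) (hd i)
    linarith
  have hDpos : ∀ δ : ℝ, 0 < δ → ∀ i, 0 < δ * (1 + (t * Ffun n dt t δ) * d i) :=
    fun δ hδ i => mul_pos hδ (hout δ hδ i)
  -- closed form
  have hgh : ∀ δ : ℝ, 0 < δ →
      g δ = (1/(n:ℝ)) * ∑ i, d i / (δ * (1 + (t * Ffun n dt t δ) * d i)) := by
    intro δ hδ
    rw [hg δ hδ, trace_form dt (t*δ) (fun j => (hden δ hδ j).ne')]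
    rw [trace_form d (t * Ffun n dt t δ) (fun i => (hout δ hδ i).ne')]
    rw [← mul_assoc, mul_comm (1/δ) (1/(n:ℝ)), mul_assoc, Finset.mul_sum]
    congr 1
    apply Finset.sum_congr rfl
    intro i _
    rw [div_mul_div_comm, one_mul]
  -- monotonicity of δ * F δ
  have hS : ∀ δ1 δ2 : ℝ, 0 < δ1 → δ1 < δ2 →
      δ1 * Ffun n dt t δ1 ≤ δ2 * Ffun n dt t δ2 := by
    intro δ1 δ2 h1 h12
    have h2 : 0 < δ2 := h1.trans h12
    simp only [Ffun]
    rw [mul_left_comm, mul_left_comm δ2]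
    apply mul_le_mul_of_nonneg_left _ (by positivity : (0:ℝ) ≤ 1/(n:ℝ))
    rw [Finset.mul_sum, Finset.mul_sum]
    apply Finset.sum_le_sum
    intro j _
    rw [mul_div_assoc', mul_div_assoc']
    rw [div_le_div_iff₀ (hden δ1 h1 j) (hden δ2 h2 j)]
    nlinarith [mul_le_mul_of_nonneg_right h12.le (hdt j), sq_nonneg (dt j),
      mul_nonneg (mul_nonneg ht.le (mul_nonneg h1.le h2.le)) (sq_nonneg (dt j))]
  have hDenMono : ∀ (i : Fin N) (δ1 δ2 : ℝ), 0 < δ1 → δ1 < δ2 →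
      δ1 * (1 + (t * Ffun n dt t δ1) * d i) < δ2 * (1 + (t * Ffun n dt t δ2) * d i) := by
    intro i δ1 δ2 h1 h12
    have hs := hS δ1 δ2 h1 h12
    nlinarith [mul_le_mul_of_nonneg_left hs (mul_nonneg ht.le (hd i))]
  -- continuity
  have hFc : ContinuousOn (Ffun n dt t) (Set.Ioi (0:ℝ)) := by
    apply continuousOn_const.mul
    apply continuousOn_finset_sum
    intro j _
    apply ContinuousOn.div continuousOn_const
    · exact (Continuous.continuousOn (by continuity))
    · intro δ hδ
      exact (hden δ hδ j).ne'
  have hcont : ContinuousOn g (Set.Ioi (0:ℝ)) := by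
    apply ContinuousOn.congr (f := fun δ => (1/(n:ℝ)) *
      ∑ i, d i / (δ * (1 + (t * Ffun n dt t δ) * d i)))
    · apply continuousOn_const.mul
      apply continuousOn_finset_sum
      intro i _
      apply ContinuousOn.div continuousOn_const
      · apply ContinuousOn.mul continuousOn_id
        apply continuousOn_const.add
        exact ((continuousOn_const.mul hFc).mul continuousOn_const)
      · intro δ hδ
        exact (hDpos δ hδ i).ne'
    · intro δ hδ
      exact hgh δ hδ
  -- strict antitonicity
  have hanti : StrictAntiOn g (Set.Ioi (0:ℝ)) := by
    intro δ1 h1 δ2 h2 h12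
    rw [Set.mem_Ioi] at h1 h2
    rw [hgh δ1 h1, hgh δ2 h2]
    apply mul_lt_mul_of_pos_left _ (by positivity : (0:ℝ) < 1/(n:ℝ))
    apply Finset.sum_lt_sum
    · intro i _
      exact mydiv_le (hd i) (hDpos δ1 h1 i) (hDenMono i δ1 δ2 h1 h12).le
    · exact ⟨i0, Finset.mem_univ i0,
        mydiv_lt hi0 (hDpos δ1 h1 i0) (hDenMono i0 δ1 δ2 h1 h12)⟩
  -- tendsto atTop at 0+
  set C : ℝ := (1/(n:ℝ)) * (d i0 / (1 + t*M*d i0)) with hC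
  have hKpos : (0:ℝ) < 1 + t*M*d i0 := by
    have : 0 ≤ t*M*d i0 := mul_nonneg (mul_nonneg ht.le hM0) (hd i0)
    linarith
  have hCpos : 0 < C := by
    rw [hC]
    positivity
  have hkey : ∀ δ : ℝ, 0 < δ → C * (1/δ) ≤ g δ := by
    intro δ hδ
    have e1 : C * (1/δ) = (1/(n:ℝ)) * (d i0 / (δ * (1 + t*M*d i0))) := by
      rw [hC, mul_assoc, div_mul_div_comm, mul_one, mul_comm (1 + t*M*d i0) δ]
    rw [e1, hgh δ hδ]
    apply mul_le_mul_of_nonneg_left _ (by positivity : (0:ℝ) ≤ 1/(n:ℝ))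
    calc d i0 / (δ * (1 + t*M*d i0))
        ≤ d i0 / (δ * (1 + (t * Ffun n dt t δ) * d i0)) := by
          apply mydiv_le (hd i0) (hDpos δ hδ i0)
          apply mul_le_mul_of_nonneg_left _ hδ.le
          have : (t * Ffun n dt t δ) * d i0 ≤ t*M*d i0 :=
            mul_le_mul_of_nonneg_right
              (mul_le_mul_of_nonneg_left (hFM δ hδ) ht.le) (hd i0)
          linarith
      _ ≤ ∑ i, d i / (δ * (1 + (t * Ffun n dt t δ) * d i)) := by
          apply Finset.single_le_sum (f := fun i => d i / (δ * (1 + (t * Ffun n dt t δ) * d i)))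
            (fun i _ => div_nonneg (hd i) (hDpos δ hδ i).le) (Finset.mem_univ i0)
  have hzero : Tendsto g (nhdsWithin 0 (Set.Ioi (0 : ℝ))) atTop := by
    have h1 : Tendsto (fun δ : ℝ => C * (1/δ)) (nhdsWithin 0 (Set.Ioi (0:ℝ))) atTop := by
      simpa [one_div] using (tendsto_inv_nhdsGT_zero (𝕜 := ℝ)).const_mul_atTop hCpos
    apply tendsto_atTop_mono' _ _ h1
    filter_upwards [self_mem_nhdsWithin] with δ hδ
    exact hkey δ hδ
  -- tendsto to 0 at atTop
  have hgnn : ∀ δ : ℝ, 0 < δ → 0 ≤ g δ := by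
    intro δ hδ
    rw [hgh δ hδ]
    exact mul_nonneg (by positivity)
      (Finset.sum_nonneg fun i _ => div_nonneg (hd i) (hDpos δ hδ i).le)
  set C' : ℝ := (1/(n:ℝ)) * ∑ i, d i with hC'
  have hub : ∀ δ : ℝ, 0 < δ → g δ ≤ C' * (1/δ) := by
    intro δ hδ
    rw [hgh δ hδ, hC', mul_assoc]
    apply mul_le_mul_of_nonneg_left _ (by positivity : (0:ℝ) ≤ 1/(n:ℝ))
    rw [Finset.sum_mul]
    apply Finset.sum_le_sum
    intro i _
    rw [mul_one_div]
    apply mydiv_le (hd i) hδ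
    have : 0 ≤ (t * Ffun n dt t δ) * d i :=
      mul_nonneg (mul_nonneg ht.le (hF0 δ hδ)) (hd i)
    nlinarith
  have hinf : Tendsto g atTop (nhds 0) := by
    apply squeeze_zero' (g := fun δ : ℝ => C' * (1/δ))
    · filter_upwards [eventually_gt_atTop (0:ℝ)] with δ hδ
      exact hgnn δ hδ
    · filter_upwards [eventually_gt_atTop (0:ℝ)] with δ hδ
      exact hub δ hδ
    · have := (tendsto_inv_atTop_zero (𝕜 := ℝ)).const_mul C'
      simpa [one_div] using this
  refine ⟨hcont, hanti, hzero, hinf, ?_⟩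
  -- unique solution
  obtain ⟨a, hga, ha0⟩ :=
    ((hzero.eventually (eventually_gt_atTop (1:ℝ))).and eventually_mem_nhdsWithin).exists
  rw [Set.mem_Ioi] at ha0
  obtain ⟨b, hgb, hab⟩ :=
    ((hinf.eventually (eventually_lt_nhds (show (0:ℝ) < 1 by norm_num))).and
      (eventually_gt_atTop a)).exists
  have hsub : Set.Icc a b ⊆ Set.Ioi (0:ℝ) := fun x hx => lt_of_lt_of_le ha0 hx.1
  obtain ⟨c, hcmem, hgc⟩ :=
    intermediate_value_Icc' hab.le (hcont.mono hsub) ⟨hgb.le, hga.le⟩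
  have hc0 : 0 < c := lt_of_lt_of_le ha0 hcmem.1
  refine ⟨c, ⟨hc0, hgc⟩, ?_⟩
  rintro y ⟨hy0, hgy⟩
  exact hanti.injOn (Set.mem_Ioi.2 hy0) (Set.mem_Ioi.2 hc0) (by rw [hgy, hgc])
end

section
/- The unique positive solutions δ(t), δ̃(t) of the canonical system satisfy the a priori bounds δ(t) ≤ (N/n)·d_max and δ̃(t) ≤ d̃_max, as well as the lower bounds δ(t) ≥ ((1/n)tr D)/(1 + t·d_max·d̃_max) and δ̃(t) ≥ ((1/n)tr D̃)/(1 + t·(N/n)·d_max·d̃_max). -/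
open Finset

/-- A priori bounds on the positive solution (δ, δ̃) of the canonical system:
δ ≤ (N/n)d_max, δ̃ ≤ d̃_max, and the corresponding lower bounds. -/
theorem canonical_solution_a_priori_bounds
    (N n : ℕ) (hN : 0 < N) (hn : 0 < n)
    (d : Fin N → ℝ) (dt : Fin n → ℝ) (dmax dtmax : ℝ)
    (hd0 : ∀ i, 0 ≤ d i) (hdmax : ∀ i, d i ≤ dmax)
    (hdt0 : ∀ j, 0 ≤ dt j) (hdtmax : ∀ j, dt j ≤ dtmax)
    (t δ δt : ℝ) (ht : 0 < t) (hδ : 0 < δ) (hδt : 0 < δt)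
    (heq1 : δ = (1 / (n : ℝ)) * ∑ i, d i / (1 + t * δt * d i))
    (heq2 : δt = (1 / (n : ℝ)) * ∑ j, dt j / (1 + t * δ * dt j)) :
    δ ≤ ((N : ℝ) / n) * dmax ∧
    δt ≤ dtmax ∧
    ((1 / (n : ℝ)) * ∑ i, d i) / (1 + t * dmax * dtmax) ≤ δ ∧
    ((1 / (n : ℝ)) * ∑ j, dt j) / (1 + t * ((N : ℝ) / n) * dmax * dtmax) ≤ δt := by
  have hnpos : (0:ℝ) < n := by exact_mod_cast hn
  have hdm : 0 ≤ dmax := le_trans (hd0 ⟨0, hN⟩) (hdmax ⟨0, hN⟩)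
  have hdtm : 0 ≤ dtmax := le_trans (hdt0 ⟨0, hn⟩) (hdtmax ⟨0, hn⟩)
  -- upper bound for δ
  have hub1 : δ ≤ ((N : ℝ) / n) * dmax := by
    rw [heq1]
    have hsum : ∑ i, d i / (1 + t * δt * d i) ≤ ∑ _i : Fin N, dmax := by
      apply Finset.sum_le_sum
      intro i _
      have h1 : d i / (1 + t * δt * d i) ≤ d i := by
        apply div_le_self (hd0 i)
        nlinarith [mul_nonneg (mul_nonneg ht.le hδt.le) (hd0 i)]
      exact h1.trans (hdmax i)
    calc (1 / (n : ℝ)) * ∑ i, d i / (1 + t * δt * d i)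
        ≤ (1 / (n : ℝ)) * ∑ _i : Fin N, dmax := by
          apply mul_le_mul_of_nonneg_left hsum
          positivity
      _ = ((N : ℝ) / n) * dmax := by
          simp [Finset.sum_const, Finset.card_univ]
          ring
  -- upper bound for δt
  have hub2 : δt ≤ dtmax := by
    rw [heq2]
    have hsum : ∑ j, dt j / (1 + t * δ * dt j) ≤ ∑ _j : Fin n, dtmax := by
      apply Finset.sum_le_sum
      intro j _
      have h1 : dt j / (1 + t * δ * dt j) ≤ dt j := by
        apply div_le_self (hdt0 j)
        nlinarith [mul_nonneg (mul_nonneg ht.le hδ.le) (hdt0 j)]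
      exact h1.trans (hdtmax j)
    calc (1 / (n : ℝ)) * ∑ j, dt j / (1 + t * δ * dt j)
        ≤ (1 / (n : ℝ)) * ∑ _j : Fin n, dtmax := by
          apply mul_le_mul_of_nonneg_left hsum
          positivity
      _ = dtmax := by
          simp [Finset.sum_const, Finset.card_univ]
          field_simp
  refine ⟨hub1, hub2, ?_, ?_⟩
  · -- lower bound for δ
    rw [heq1]
    have hden : (0:ℝ) < 1 + t * dmax * dtmax := by
      nlinarith [mul_nonneg (mul_nonneg ht.le hdm) hdtm]
    rw [mul_div_assoc, Finset.sum_div]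
    apply mul_le_mul_of_nonneg_left _ (by positivity : (0:ℝ) ≤ 1 / (n:ℝ))
    apply Finset.sum_le_sum
    intro i _
    have hden2 : (0:ℝ) < 1 + t * δt * d i := by
      nlinarith [mul_nonneg (mul_nonneg ht.le hδt.le) (hd0 i)]
    apply div_le_div_of_nonneg_left (hd0 i) hden2
    nlinarith [mul_le_mul (mul_le_mul_of_nonneg_left hub2 ht.le) (hdmax i) (hd0 i)
      (mul_nonneg ht.le hdtm)]
  · -- lower bound for δt
    rw [heq2]
    have hNd : 0 ≤ ((N : ℝ) / n) * dmax := by positivity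
    have hden : (0:ℝ) < 1 + t * ((N : ℝ) / n) * dmax * dtmax := by
      nlinarith [mul_nonneg (mul_nonneg ht.le hNd) hdtm]
    rw [mul_div_assoc, Finset.sum_div]
    apply mul_le_mul_of_nonneg_left _ (by positivity : (0:ℝ) ≤ 1 / (n:ℝ))
    apply Finset.sum_le_sum
    intro j _
    have hden2 : (0:ℝ) < 1 + t * δ * dt j := by
      nlinarith [mul_nonneg (mul_nonneg ht.le hδ.le) (hdt0 j)]
    apply div_le_div_of_nonneg_left (hdt0 j) hden2
    nlinarith [mul_le_mul (mul_le_mul_of_nonneg_left hub1 ht.le) (hdtmax j) (hdt0 j)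
      (mul_nonneg ht.le hNd)]
end

section
/- The derivatives of δ and δ̃ (solutions of the canonical system) satisfy the coupled linear relations δ'(t) = −γ·δ̃(t) − γ·t·δ̃'(t) and δ̃'(t) = −γ̃·δ(t) − γ̃·t·δ'(t), and hence δ'(t) = (t·γ·γ̃·δ − γ·δ̃)/(1 − t²·γ·γ̃) whenever 1 − t²γγ̃ ≠ 0. -/
/-!
Differentiate each fixed-point equation termwise: since
`d/ds [d / (1 + s δ̃(s) d)] = -(δ̃ + s δ̃') d² / (1 + s δ̃ d)²`, the derivative of the right-hand
side of the equation for `δ` is `-(δ̃ + t δ̃') γ`, and symmetrically for `δ̃`. Substituting the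
second relation into the first and solving the resulting linear equation gives `δ'`.
-/

open Finset

theorem HasDerivAt.const_div_one_add_mul_const {g : ℝ → ℝ} {g' t : ℝ} (a : ℝ)
    (hg : HasDerivAt g g' t) (hden : 1 + g t * a ≠ 0) :
    HasDerivAt (fun s => a / (1 + g s * a)) (-g' * (a ^ 2 / (1 + g t * a) ^ 2)) t := by
  refine ((hasDerivAt_const t a).fun_div ((hg.mul_const a).const_add 1) hden).congr_deriv ?_
  field_simp
  ring

theorem HasDerivAt.const_mul_sum_div_one_add_mul {ι : Type*} [Fintype ι] {g : ℝ → ℝ}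
    {g' t : ℝ} (c : ℝ) (a : ι → ℝ) (hg : HasDerivAt g g' t) (hden : ∀ i, 1 + g t * a i ≠ 0) :
    HasDerivAt (fun s => c * ∑ i, a i / (1 + g s * a i))
      (-g' * (c * ∑ i, a i ^ 2 / (1 + g t * a i) ^ 2)) t := by
  have hsum := HasDerivAt.fun_sum (u := univ) fun i _ =>
    hg.const_div_one_add_mul_const (a i) (hden i)
  refine (hsum.const_mul c).congr_deriv ?_
  rw [mul_sum, mul_sum, mul_sum]
  exact sum_congr rfl fun i _ => by ring

theorem deriv_eq_of_forall_pos_eq_sum_div {ι : Type*} [Fintype ι] {f h : ℝ → ℝ} (c : ℝ)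
    (a : ι → ℝ) {t : ℝ} (ht : 0 < t) (hh : DifferentiableAt ℝ h t)
    (hden : ∀ i, 1 + t * h t * a i ≠ 0)
    (hf : ∀ s, 0 < s → f s = c * ∑ i, a i / (1 + s * h s * a i)) :
    deriv f t = -(h t + t * deriv h t) * (c * ∑ i, a i ^ 2 / (1 + t * h t * a i) ^ 2) := by
  have hg : HasDerivAt (fun s => s * h s) (h t + t * deriv h t) t := by
    simpa only [one_mul, add_comm] using (hasDerivAt_id' t).fun_mul hh.hasDerivAt
  have hfeq : f =ᶠ[nhds t] fun s => c * ∑ i, a i / (1 + s * h s * a i) :=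
    Filter.eventually_of_mem (Ioi_mem_nhds ht) hf
  rw [hfeq.deriv_eq, (hg.const_mul_sum_div_one_add_mul c a hden).deriv]

theorem one_add_mul_mul_ne_zero {t x a : ℝ} (ht : 0 ≤ t) (hx : 0 ≤ x) (ha : 0 ≤ a) :
    1 + t * x * a ≠ 0 := by
  positivity

theorem canonical_solution_derivatives_general
    (N n : ℕ)
    (d : Fin N → ℝ) (dt : Fin n → ℝ)
    (hd0 : ∀ i, 0 ≤ d i) (hdt0 : ∀ j, 0 ≤ dt j)
    (δ δt : ℝ → ℝ)
    (hdiff : ∀ s : ℝ, 0 < s → DifferentiableAt ℝ δ s ∧ DifferentiableAt ℝ δt s)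
    (hpos : ∀ s : ℝ, 0 < s → 0 < δ s ∧ 0 < δt s)
    (heq1 : ∀ s : ℝ, 0 < s →
      δ s = (1 / (n : ℝ)) * ∑ i, d i / (1 + s * δt s * d i))
    (heq2 : ∀ s : ℝ, 0 < s →
      δt s = (1 / (n : ℝ)) * ∑ j, dt j / (1 + s * δ s * dt j))
    (t : ℝ) (ht : 0 < t)
    (γ γt : ℝ)
    (hγ : γ = (1 / (n : ℝ)) * ∑ i, (d i) ^ 2 / (1 + t * δt t * d i) ^ 2)
    (hγt : γt = (1 / (n : ℝ)) * ∑ j, (dt j) ^ 2 / (1 + t * δ t * dt j) ^ 2) :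
    deriv δ t = -γ * δt t - γ * t * deriv δt t ∧
    deriv δt t = -γt * δ t - γt * t * deriv δ t ∧
    (1 - t ^ 2 * γ * γt ≠ 0 →
      deriv δ t = (t * γ * γt * δ t - γ * δt t) / (1 - t ^ 2 * γ * γt)) := by
  obtain ⟨hδ, hδt⟩ := hpos t ht
  obtain ⟨hδdiff, hδtdiff⟩ := hdiff t ht
  have hδ' : deriv δ t = -γ * δt t - γ * t * deriv δt t := by
    rw [deriv_eq_of_forall_pos_eq_sum_div _ d ht hδtdiff
      (fun i => one_add_mul_mul_ne_zero ht.le hδt.le (hd0 i)) heq1, ← hγ]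
    ring
  have hδt' : deriv δt t = -γt * δ t - γt * t * deriv δ t := by
    rw [deriv_eq_of_forall_pos_eq_sum_div _ dt ht hδdiff
      (fun j => one_add_mul_mul_ne_zero ht.le hδ.le (hdt0 j)) heq2, ← hγt]
    ring
  refine ⟨hδ', hδt', fun hne => ?_⟩
  rw [eq_div_iff hne]
  linear_combination hδ' - γ * t * hδt'

/-- The coupled linear relations for the derivatives of δ and δ̃:
δ' = −γδ̃ − γtδ̃', δ̃' = −γ̃δ − γ̃tδ', hence
δ' = (tγγ̃δ − γδ̃)/(1 − t²γγ̃) when 1 − t²γγ̃ ≠ 0. -/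
theorem canonical_solution_derivatives
    (N n : ℕ) (hn : 0 < n)
    (d : Fin N → ℝ) (dt : Fin n → ℝ)
    (hd0 : ∀ i, 0 ≤ d i) (hdt0 : ∀ j, 0 ≤ dt j)
    (δ δt : ℝ → ℝ)
    (hdiff : ∀ s : ℝ, 0 < s → DifferentiableAt ℝ δ s ∧ DifferentiableAt ℝ δt s)
    (hpos : ∀ s : ℝ, 0 < s → 0 < δ s ∧ 0 < δt s)
    (heq1 : ∀ s : ℝ, 0 < s →
      δ s = (1 / (n : ℝ)) * ∑ i, d i / (1 + s * δt s * d i))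
    (heq2 : ∀ s : ℝ, 0 < s →
      δt s = (1 / (n : ℝ)) * ∑ j, dt j / (1 + s * δ s * dt j))
    (t : ℝ) (ht : 0 < t)
    (γ γt : ℝ)
    (hγ : γ = (1 / (n : ℝ)) * ∑ i, (d i) ^ 2 / (1 + t * δt t * d i) ^ 2)
    (hγt : γt = (1 / (n : ℝ)) * ∑ j, (dt j) ^ 2 / (1 + t * δ t * dt j) ^ 2) :
    deriv δ t = -γ * δt t - γ * t * deriv δt t ∧
    deriv δt t = -γt * δ t - γt * t * deriv δ t ∧
    (1 - t ^ 2 * γ * γt ≠ 0 →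
      deriv δ t = (t * γ * γt * δ t - γ * δt t) / (1 - t ^ 2 * γ * γt)) :=
  canonical_solution_derivatives_general N n d dt hd0 hdt0 δ δt hdiff hpos heq1 heq2 t ht γ γt hγ
    hγt
end

section
/- Under the assumptions that D and D̃ have entries bounded by d_max, d̃_max and normalized traces bounded below by positive constants, one has the strict inequality t²·γ(t)·γ̃(t) < 1 for all t > 0, so that σ²(t) = −log(1 − t²γγ̃) is well defined; moreover 1 − t²γγ̃ ≥ (n/N)²·δ²δ̃²/(d_max²·d̃_max²). -/
/-!
Put `A = (1/n) tr(D T²)` and `B = (1/n) tr(D̃ T̃²)`. Since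
`d/(1 + c d) = c d²/(1 + c d)² + d/(1 + c d)²`, the canonical equations split as
`δ = tδ̃γ + A` and `δ̃ = tδγ̃ + B`, whence `(1 - t²γγ̃) δδ̃ = δδ̃ - (δ - A)(δ̃ - B) ≥ AB`.
Cauchy–Schwarz with weights `d i` gives `δ² ≤ (N d_max / n) A` and `δ̃² ≤ d̃_max B`, so
`1 - t²γγ̃ ≥ x := n δδ̃ / (N d_max d̃_max)`. Finally `0 < x ≤ 1` because `δ ≤ N d_max / n`
and `δ̃ ≤ d̃_max`, hence `x ≥ x²`.
-/

open Finset

section ResolventSums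

variable {ι : Type*} [Fintype ι] {d : ι → ℝ} {c : ℝ}

lemma div_one_add_mul_eq {x c : ℝ} (h : 1 + c * x ≠ 0) :
    x / (1 + c * x) = c * (x ^ 2 / (1 + c * x) ^ 2) + x / (1 + c * x) ^ 2 := by
  rw [mul_div_assoc', ← add_div, sq (1 + c * x), show c * x ^ 2 + x = x * (1 + c * x) by ring,
    mul_div_mul_right _ _ h]

omit [Fintype ι] in
lemma one_le_one_add_mul (hc : 0 ≤ c) (hd : ∀ i, 0 ≤ d i) (i : ι) : 1 ≤ 1 + c * d i :=
  le_add_of_nonneg_right (mul_nonneg hc (hd i))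

lemma normalized_sum_div_eq (m : ℝ) (hc : 0 ≤ c) (hd : ∀ i, 0 ≤ d i) :
    1 / m * ∑ i, d i / (1 + c * d i) =
      c * (1 / m * ∑ i, d i ^ 2 / (1 + c * d i) ^ 2) +
        1 / m * ∑ i, d i / (1 + c * d i) ^ 2 := by
  have h i : 1 + c * d i ≠ 0 := (one_pos.trans_le (one_le_one_add_mul hc hd i)).ne'
  simp only [div_one_add_mul_eq (h _), sum_add_distrib, ← mul_sum]
  ring

lemma sum_le_card_mul {dmax : ℝ} (hdmax : ∀ i, d i ≤ dmax) :
    ∑ i, d i ≤ Fintype.card ι * dmax := by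
  simpa using sum_le_card_nsmul univ d dmax fun i _ ↦ hdmax i

lemma normalized_sum_div_le {m dmax : ℝ} (hm : 0 ≤ m) (hc : 0 ≤ c) (hd : ∀ i, 0 ≤ d i)
    (hdmax : ∀ i, d i ≤ dmax) :
    1 / m * ∑ i, d i / (1 + c * d i) ≤ Fintype.card ι * dmax / m := by
  rw [one_div_mul_eq_div]
  gcongr
  calc ∑ i, d i / (1 + c * d i) ≤ ∑ i, d i :=
        sum_le_sum fun i _ ↦ div_le_self (hd i) (one_le_one_add_mul hc hd i)
    _ ≤ Fintype.card ι * dmax := sum_le_card_mul hdmax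

lemma sq_normalized_sum_div_le {m dmax : ℝ} (hc : 0 ≤ c) (hd : ∀ i, 0 ≤ d i)
    (hdmax : ∀ i, d i ≤ dmax) :
    (1 / m * ∑ i, d i / (1 + c * d i)) ^ 2 ≤
      Fintype.card ι * dmax / m * (1 / m * ∑ i, d i / (1 + c * d i) ^ 2) := by
  have hpos i : 0 < 1 + c * d i := one_pos.trans_le (one_le_one_add_mul hc hd i)
  have hcs : (∑ i, d i / (1 + c * d i)) ^ 2 ≤ (∑ i, d i) * ∑ i, d i / (1 + c * d i) ^ 2 :=
    sum_sq_le_sum_mul_sum_of_sq_le_mul univ (fun i _ ↦ hd i)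
      (fun i _ ↦ div_nonneg (hd i) (pow_nonneg (hpos i).le 2))
      fun i _ ↦ le_of_eq (by rw [div_pow, sq, mul_div_assoc])
  have hR : 0 ≤ ∑ i, d i / (1 + c * d i) ^ 2 :=
    sum_nonneg fun i _ ↦ div_nonneg (hd i) (pow_nonneg (hpos i).le 2)
  calc (1 / m * ∑ i, d i / (1 + c * d i)) ^ 2
      = (∑ i, d i / (1 + c * d i)) ^ 2 / m ^ 2 := by ring
    _ ≤ (∑ i, d i) * (∑ i, d i / (1 + c * d i) ^ 2) / m ^ 2 := by gcongr
    _ ≤ Fintype.card ι * dmax * (∑ i, d i / (1 + c * d i) ^ 2) / m ^ 2 := by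
        gcongr; exact sum_le_card_mul hdmax
    _ = _ := by ring

end ResolventSums

lemma div_le_one_sub_mul_of_split {t γ γt δ δt A B M Mt : ℝ} (ht : 0 ≤ t) (hγ : 0 ≤ γ)
    (hγt : 0 ≤ γt) (hδ : 0 < δ) (hδt : 0 < δt) (hsplit : δ = t * δt * γ + A)
    (hsplitt : δt = t * δ * γt + B) (hA : δ ^ 2 ≤ M * A) (hB : δt ^ 2 ≤ Mt * B)
    (hM : δ ≤ M) (hMt : δt ≤ Mt) :
    δ * δt / (M * Mt) ≤ 1 - t ^ 2 * γ * γt := by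
  have hMpos : 0 < M := hδ.trans_le hM
  have hMtpos : 0 < Mt := hδt.trans_le hMt
  have hApos : 0 < A := pos_of_mul_pos_right (hA.trans_lt' (by positivity)) hMpos.le
  have hBpos : 0 < B := pos_of_mul_pos_right (hB.trans_lt' (by positivity)) hMtpos.le
  have hAB : δ ^ 2 * δt ^ 2 ≤ M * Mt * (A * B) := by
    calc δ ^ 2 * δt ^ 2 ≤ (M * A) * (Mt * B) := by gcongr
      _ = M * Mt * (A * B) := by ring
  have hcore : A * B ≤ (1 - t ^ 2 * γ * γt) * (δ * δt) := by
    have ha : 0 ≤ t * δt * γ := by positivity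
    have hb : 0 ≤ t * δ * γt := by positivity
    have : (1 - t ^ 2 * γ * γt) * (δ * δt) = δ * δt - (t * δt * γ) * (t * δ * γt) := by ring
    rw [this]
    nlinarith [mul_nonneg hApos.le hb, mul_nonneg hBpos.le ha]
  rw [div_le_iff₀ (by positivity)]
  refine le_of_mul_le_mul_left ?_ (mul_pos hδ hδt)
  calc δ * δt * (δ * δt) = δ ^ 2 * δt ^ 2 := by ring
    _ ≤ M * Mt * (A * B) := hAB
    _ ≤ M * Mt * ((1 - t ^ 2 * γ * γt) * (δ * δt)) := by gcongr
    _ = δ * δt * ((1 - t ^ 2 * γ * γt) * (M * Mt)) := by ring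

theorem variance_well_defined_general
    (N n : ℕ) (hN : 0 < N) (hn : 0 < n)
    (d : Fin N → ℝ) (dt : Fin n → ℝ) (dmax dtmax : ℝ)
    (hdmaxpos : 0 < dmax) (hdtmaxpos : 0 < dtmax)
    (hd0 : ∀ i, 0 ≤ d i) (hdmax : ∀ i, d i ≤ dmax)
    (hdt0 : ∀ j, 0 ≤ dt j) (hdtmax : ∀ j, dt j ≤ dtmax)
    (t δ δt : ℝ) (ht : 0 < t) (hδ : 0 < δ) (hδt : 0 < δt)
    (heq1 : δ = (1 / (n : ℝ)) * ∑ i, d i / (1 + t * δt * d i))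
    (heq2 : δt = (1 / (n : ℝ)) * ∑ j, dt j / (1 + t * δ * dt j))
    (γ γt : ℝ)
    (hγ : γ = (1 / (n : ℝ)) * ∑ i, (d i) ^ 2 / (1 + t * δt * d i) ^ 2)
    (hγt : γt = (1 / (n : ℝ)) * ∑ j, (dt j) ^ 2 / (1 + t * δ * dt j) ^ 2) :
    t ^ 2 * γ * γt < 1 ∧
    ((n : ℝ) / N) ^ 2 * δ ^ 2 * δt ^ 2 / (dmax ^ 2 * dtmax ^ 2) ≤
      1 - t ^ 2 * γ * γt := by
  have hnR : (0 : ℝ) < n := by exact_mod_cast hn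
  have hNR : (0 : ℝ) < N := by exact_mod_cast hN
  have hc : 0 ≤ t * δt := by positivity
  have hct : 0 ≤ t * δ := by positivity
  have hsplit : δ = t * δt * γ + 1 / n * ∑ i, d i / (1 + t * δt * d i) ^ 2 := by
    rw [hγ, heq1]; exact normalized_sum_div_eq _ hc hd0
  have hsplitt : δt = t * δ * γt + 1 / n * ∑ j, dt j / (1 + t * δ * dt j) ^ 2 := by
    rw [hγt, heq2]; exact normalized_sum_div_eq _ hct hdt0
  have hA := heq1 ▸ sq_normalized_sum_div_le hc hd0 hdmax
  have hB := heq2 ▸ sq_normalized_sum_div_le hct hdt0 hdtmax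
  have hM := heq1 ▸ normalized_sum_div_le hnR.le hc hd0 hdmax
  have hMt := heq2 ▸ normalized_sum_div_le hnR.le hct hdt0 hdtmax
  simp only [Fintype.card_fin] at hA hB hM hMt
  have hx := div_le_one_sub_mul_of_split ht.le (by rw [hγ]; positivity)
    (by rw [hγt]; positivity) hδ hδt hsplit hsplitt hA hB hM hMt
  set x := δ * δt / (N * dmax / n * (n * dtmax / n))
  have hx0 : 0 < x := by positivity
  have hx1 : x ≤ 1 :=
    div_le_one_of_le₀ (mul_le_mul hM hMt hδt.le (by positivity)) (by positivity)
  have hsq : ((n : ℝ) / N) ^ 2 * δ ^ 2 * δt ^ 2 / (dmax ^ 2 * dtmax ^ 2) = x ^ 2 := by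
    simp only [x]; field_simp
  exact ⟨by linarith, hsq ▸ (pow_le_of_le_one hx0.le hx1 two_ne_zero).trans hx⟩

/-- The variance is well defined: t²γγ̃ < 1 for all t > 0, and moreover
1 − t²γγ̃ ≥ (n/N)²δ²δ̃²/(d_max²·d̃_max²). -/
theorem variance_well_defined
    (N n : ℕ) (hN : 0 < N) (hn : 0 < n)
    (d : Fin N → ℝ) (dt : Fin n → ℝ) (dmax dtmax : ℝ)
    (hdmaxpos : 0 < dmax) (hdtmaxpos : 0 < dtmax)
    (hd0 : ∀ i, 0 ≤ d i) (hdmax : ∀ i, d i ≤ dmax)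
    (hdt0 : ∀ j, 0 ≤ dt j) (hdtmax : ∀ j, dt j ≤ dtmax)
    (htrD : 0 < ∑ i, d i) (htrDt : 0 < ∑ j, dt j)
    (t δ δt : ℝ) (ht : 0 < t) (hδ : 0 < δ) (hδt : 0 < δt)
    (heq1 : δ = (1 / (n : ℝ)) * ∑ i, d i / (1 + t * δt * d i))
    (heq2 : δt = (1 / (n : ℝ)) * ∑ j, dt j / (1 + t * δ * dt j))
    (γ γt : ℝ)
    (hγ : γ = (1 / (n : ℝ)) * ∑ i, (d i) ^ 2 / (1 + t * δt * d i) ^ 2)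
    (hγt : γt = (1 / (n : ℝ)) * ∑ j, (dt j) ^ 2 / (1 + t * δ * dt j) ^ 2) :
    t ^ 2 * γ * γt < 1 ∧
    ((n : ℝ) / N) ^ 2 * δ ^ 2 * δt ^ 2 / (dmax ^ 2 * dtmax ^ 2) ≤
      1 - t ^ 2 * γ * γt :=
  variance_well_defined_general N n hN hn d dt dmax dtmax hdmaxpos hdtmaxpos hd0 hdmax hdt0 hdtmax t
    δ δt ht hδ hδt heq1 heq2 γ γt hγ hγt
end

section
/- Let R = (I + tα̃D)⁻¹ and T = (I + tδ̃D)⁻¹ be N×N, and R̃ = (I + tαD̃)⁻¹, T̃ = (I + tδD̃)⁻¹ be n×n, for positive reals α, α̃, δ, δ̃ and t ≥ 0. Then for any N×N diagonal matrix A, (1/n)·tr(A(R − T)) = t²·(α − δ)·((1/n)tr(D̃R̃D̃T̃))·((1/n)tr(ARDT)), given the intermediate relation δ̃ − α̃ = t(α − δ)·(1/n)tr(D̃R̃D̃T̃) where α̃ = (1/n)tr(D̃R̃) and δ̃ = (1/n)tr(D̃T̃). -/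
open Matrix

lemma inv_one_add_smul_diagonal {m : ℕ} (v : Fin m → ℝ) (c : ℝ)
    (h : ∀ i, 1 + c * v i ≠ 0) :
    (1 + c • Matrix.diagonal v)⁻¹ = Matrix.diagonal (fun i => (1 + c * v i)⁻¹) := by
  have h1 : (1 + c • Matrix.diagonal v) = Matrix.diagonal (fun i => 1 + c * v i) := by
    ext i j
    by_cases hij : i = j <;>
      simp [Matrix.diagonal, Matrix.one_apply, hij]
  rw [h1]
  apply Matrix.inv_eq_right_inv
  rw [Matrix.diagonal_mul_diagonal]
  ext i j
  by_cases hij : i = j <;>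
    simp [Matrix.diagonal, Matrix.one_apply, hij, mul_inv_cancel₀ (h j)]

/-- The cornerstone approximation identity: for any bounded diagonal A,
(1/n)·tr(A(R − T)) = t²(α − δ)·((1/n)tr(D̃R̃D̃T̃)),
given the intermediate relation δ̃ − α̃ = t(α − δ)·(1/n)tr(D̃R̃D̃T̃). -/
theorem trace_A_R_sub_T (N n : ℕ) (hn : 0 < n)
    (d : Fin N → ℝ) (dt : Fin n → ℝ)
    (hd0 : ∀ i, 0 ≤ d i) (hdt0 : ∀ j, 0 ≤ dt j)
    (t α αt δ δt : ℝ) (ht : 0 ≤ t)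
    (hα : 0 < α) (hαt : 0 < αt) (hδ : 0 < δ) (hδt : 0 < δt)
    (R T : Matrix (Fin N) (Fin N) ℝ) (Rt Tt : Matrix (Fin n) (Fin n) ℝ)
    (hR : R = (1 + (t * αt) • Matrix.diagonal d)⁻¹)
    (hT : T = (1 + (t * δt) • Matrix.diagonal d)⁻¹)
    (hRt : Rt = (1 + (t * α) • Matrix.diagonal dt)⁻¹)
    (hTt : Tt = (1 + (t * δ) • Matrix.diagonal dt)⁻¹)
    (hαt_def : αt = (1 / (n : ℝ)) * (Matrix.diagonal dt * Rt).trace)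
    (hδt_def : δt = (1 / (n : ℝ)) * (Matrix.diagonal dt * Tt).trace)
    (hintermediate : δt - αt = t * (α - δ) *
      ((1 / (n : ℝ)) * (Matrix.diagonal dt * Rt * Matrix.diagonal dt * Tt).trace))
    (a : Fin N → ℝ) :
    (1 / (n : ℝ)) * (Matrix.diagonal a * (R - T)).trace =
      t ^ 2 * (α - δ) *
        ((1 / (n : ℝ)) * (Matrix.diagonal dt * Rt * Matrix.diagonal dt * Tt).trace) *
        ((1 / (n : ℝ)) * (Matrix.diagonal a * R * Matrix.diagonal d * T).trace) := by
  have hRα : ∀ i, 1 + t * αt * d i ≠ 0 := fun i => by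
    have := hd0 i; positivity
  have hTδ : ∀ i, 1 + t * δt * d i ≠ 0 := fun i => by
    have := hd0 i; positivity
  rw [hR, hT, inv_one_add_smul_diagonal d _ hRα, inv_one_add_smul_diagonal d _ hTδ]
  set r : Fin N → ℝ := fun i => (1 + t * αt * d i)⁻¹
  set τ : Fin N → ℝ := fun i => (1 + t * δt * d i)⁻¹
  have key : ∀ i, r i - τ i = t * (δt - αt) * (r i * d i * τ i) := by
    intro i
    have hτ : (1 + t * δt * d i) * τ i = 1 := mul_inv_cancel₀ (hTδ i)
    have hr : r i * (1 + t * αt * d i) = 1 := inv_mul_cancel₀ (hRα i)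
    calc r i - τ i
        = r i * ((1 + t * δt * d i) * τ i) - (r i * (1 + t * αt * d i)) * τ i := by
          rw [hτ, hr]; ring
      _ = t * (δt - αt) * (r i * d i * τ i) := by ring
  have LHS : (Matrix.diagonal a * (Matrix.diagonal r - Matrix.diagonal τ)).trace =
      t * (δt - αt) * (Matrix.diagonal a * Matrix.diagonal r * Matrix.diagonal d *
        Matrix.diagonal τ).trace := by
    simp only [Matrix.diagonal_mul_diagonal, Matrix.mul_sub, Matrix.trace_sub,
      Matrix.trace_diagonal, ← Finset.sum_sub_distrib, Finset.mul_sum]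
    apply Finset.sum_congr rfl
    intro i _
    rw [← mul_sub, key i]
    ring
  rw [LHS, hintermediate]
  ring
end
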